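/- Let α₁ = 1/(φ+2). For every ε > 0 and every positive integer N there exists a positive integer K such that min_{K ≤ k ≤ K+N} ‖F_k α₁‖ > 1/5 − ε. -/

import Mathlib

/-!
Writing `ψ = (1 - √5) / 2` for the conjugate of the golden ratio, `1 / (φ + 2) = (2 + ψ) / 5`, and
`ψ F_{n+1} + F_n = ψ^{n+1}` gives `F_{n+1} / (φ + 2) = (2 F_{n+1} - F_n) / 5 + ψ^{n+1} / 5`.
The integer `2 F_{n+1} - F_n` is the Lucas number `L_n`, which is never divisible by 5
(`L_{n+1} ≡ 3 L_n mod 5`), so its fifth is at distance at least `1/5` from the integers, while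
the error `ψ^{n+1} / 5` tends to `0`.
-/

noncomputable def distNearestInt (x : ℝ) : ℝ := |x - round x|

noncomputable def φ : ℝ := (1 + Real.sqrt 5) / 2

lemma distNearestInt_le (x : ℝ) (z : ℤ) : distNearestInt x ≤ |x - z| :=
  round_le x z

lemma distNearestInt_sub_abs_le_distNearestInt_add (x e : ℝ) :
    distNearestInt x - |e| ≤ distNearestInt (x + e) := by
  have hround := distNearestInt_le x (round (x + e))
  have htri : |x - round (x + e)| ≤ |e| + |x + e - round (x + e)| := by
    simpa using abs_sub_le (x - round (x + e)) (x + e - round (x + e)) 0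
  unfold distNearestInt at *
  linarith

lemma inv_le_distNearestInt_intCast_div {q : ℕ} (hq : 0 < q) {a : ℤ} (ha : ¬ (q : ℤ) ∣ a) :
    1 / (q : ℝ) ≤ distNearestInt (a / q) := by
  have hq' : (0 : ℝ) < q := by exact_mod_cast hq
  have hne : a - q * round ((a : ℝ) / q) ≠ 0 := fun h => ha ⟨_, sub_eq_zero.mp h⟩
  have hone : (1 : ℝ) ≤ |(a : ℝ) - q * round ((a : ℝ) / q)| := by
    exact_mod_cast Int.one_le_abs hne
  calc 1 / (q : ℝ) ≤ |(a : ℝ) - q * round ((a : ℝ) / q)| / q := by gcongr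
    _ = distNearestInt (a / q) := by
      rw [distNearestInt, ← abs_of_pos hq', ← abs_div, abs_of_pos hq']
      congr 1
      field_simp

lemma lucas_cast_zmod_five (n : ℕ) :
    ((2 * Nat.fib (n + 1) - Nat.fib n : ℤ) : ZMod 5) = 2 * 3 ^ n := by
  induction n with
  | zero => simp
  | succ n ih =>
    rw [pow_succ, ← mul_assoc, ← ih, Nat.fib_add_two]
    have h5 : (5 : ZMod 5) = 0 := rfl
    push_cast
    linear_combination (Nat.fib n - Nat.fib (n + 1) : ZMod 5) * h5

lemma not_five_dvd_lucas (n : ℕ) : ¬ (5 : ℤ) ∣ 2 * Nat.fib (n + 1) - Nat.fib n := by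
  have h2 : (2 : ZMod 5) ≠ 0 := by decide
  have h3 : (3 : ZMod 5) ≠ 0 := by decide
  have : Fact (Nat.Prime 5) := ⟨by norm_num⟩
  intro h
  have h0 := (ZMod.intCast_zmod_eq_zero_iff_dvd _ 5).mpr h
  rw [lucas_cast_zmod_five] at h0
  exact mul_ne_zero h2 (pow_ne_zero n h3) h0

lemma one_div_goldenRatio_add_two : 1 / (Real.goldenRatio + 2) = (2 + Real.goldenConj) / 5 := by
  have hpos : 0 < Real.goldenRatio + 2 := by linarith [Real.goldenRatio_pos]
  rw [div_eq_div_iff hpos.ne' (by norm_num), ← Real.one_sub_goldenConj]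
  linear_combination Real.goldenConj_sq

lemma fib_succ_div_goldenRatio_add_two (n : ℕ) :
    (Nat.fib (n + 1) : ℝ) * (1 / (Real.goldenRatio + 2)) =
      ((2 * Nat.fib (n + 1) - Nat.fib n : ℤ) : ℝ) / 5 + Real.goldenConj ^ (n + 1) / 5 := by
  rw [one_div_goldenRatio_add_two, ← Real.goldenConj_mul_fib_succ_add_fib]
  push_cast
  ring

lemma one_fifth_sub_le_distNearestInt_fib_succ (n : ℕ) :
    1 / 5 - |Real.goldenConj| ^ (n + 1) / 5 ≤
      distNearestInt ((Nat.fib (n + 1) : ℝ) * (1 / (φ + 2))) := by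
  have hfar := inv_le_distNearestInt_intCast_div (q := 5) (by norm_num) (not_five_dvd_lucas n)
  have hnear := distNearestInt_sub_abs_le_distNearestInt_add
    (((2 * Nat.fib (n + 1) - Nat.fib n : ℤ) : ℝ) / 5) (Real.goldenConj ^ (n + 1) / 5)
  rw [show φ = Real.goldenRatio from rfl, fib_succ_div_goldenRatio_add_two]
  rw [abs_div, abs_pow, abs_of_pos (by norm_num : (0 : ℝ) < 5)] at hnear
  push_cast at hfar hnear ⊢
  linarith

theorem window_min_gt_general (ε : ℝ) (hε : 0 < ε) (N : ℕ) :
    ∃ K : ℕ, 1 ≤ K ∧ ∀ k, K ≤ k → k ≤ K + N →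
      distNearestInt ((Nat.fib k : ℝ) * (1 / (φ + 2))) > 1 / 5 - ε := by
  have hψ : |Real.goldenConj| < 1 :=
    abs_lt.mpr ⟨Real.neg_one_lt_goldenConj, by linarith [Real.goldenConj_neg]⟩
  obtain ⟨n, hn⟩ := exists_pow_lt_of_lt_one hε hψ
  refine ⟨n + 1, by omega, fun k hk _ => ?_⟩
  obtain ⟨m, rfl⟩ : ∃ m, k = m + 1 := ⟨k - 1, by omega⟩
  have hdecay : |Real.goldenConj| ^ (m + 1) ≤ |Real.goldenConj| ^ n :=
    pow_le_pow_of_le_one (abs_nonneg _) hψ.le (by omega)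
  have hpos : 0 ≤ |Real.goldenConj| ^ (m + 1) := by positivity
  linarith [one_fifth_sub_le_distNearestInt_fib_succ m]

theorem window_min_gt (ε : ℝ) (hε : 0 < ε) (N : ℕ) (hN : 1 ≤ N) :
    ∃ K : ℕ, 1 ≤ K ∧ ∀ k, K ≤ k → k ≤ K + N →
      distNearestInt ((Nat.fib k : ℝ) * (1 / (φ + 2))) > 1 / 5 - ε :=
  window_min_gt_general ε hε N
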